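/- arXiv:math/0506203 — 2 statements merged into one kernel-verified Lean document; each statement's English description precedes it below -/
import Mathlib

section
/- In the semigroup F generated by the automaton I, for all a,b ∈ ℕ with a ≥ 3 and a ≥ b+2, the relation f_a f_b² = f_a holds. -/
/-- The transformation of `{0,1}*` given by the state `s` of the automaton `I`:
it flips the first letter (`φ(s) = ⟨e,e⟩σ`).  Letters: `false = 0`, `true = 1`. -/
def sAct : List Bool → List Bool
  | [] => []
  | a :: w => (!a) :: w

/-- The transformation of `{0,1}*` given by the state `f` of the automaton `I`
(`φ(f) = ⟨s,f⟩ζ`): `0w ↦ 0·w^s` and `1w ↦ 0·w^f`. -/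
def fAct : List Bool → List Bool
  | [] => []
  | false :: w => false :: sAct w
  | true :: w => false :: fAct w

/-- The elements `f_n` of the semigroup: `f₁ = s`, `f₂ = f`,
`f_n = f_{n-2} f_{n-1}` (products written left-to-right). -/
def fA : ℕ → List Bool → List Bool
  | 0 => id
  | 1 => sAct
  | 2 => fAct
  | (n + 3) => fun w => fA (n + 2) (fA (n + 1) w)

/-- The left-to-right product `f_{i₁} f_{i₂} ⋯ f_{i_k}` of the elements `f_i`
along a list of indices. -/
def prodL (l : List ℕ) (w : List Bool) : List Bool :=
  l.foldl (fun v i => fA i v) w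

/-- Membership in the semigroup `F` generated by `s` and `f`: `g` is a nonempty
product of the generators (`false` stands for the generator `s`, `true` for `f`;
products are written left-to-right). -/
def inF (g : List Bool → List Bool) : Prop :=
  ∃ u : List Bool, u ≠ [] ∧
    (fun w => u.foldl (fun v a => if a then fAct v else sAct v) w) = g

theorem fA_succ3 (n : ℕ) (w : List Bool) : fA (n + 3) w = fA (n + 2) (fA (n + 1) w) := rfl

theorem fA_nil : ∀ n, fA n [] = []
  | 0 => rfl
  | 1 => rfl
  | 2 => rfl
  | (n + 3) => by rw [fA_succ3, fA_nil (n + 1), fA_nil (n + 2)]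

/-- For `n ≥ 2`, `f_n` acts on a word starting with `0` by keeping that `0`
and acting by `f_{n-1}` on the tail. -/
theorem fA_cons_false : ∀ n w, fA (n + 2) (false :: w) = false :: fA (n + 1) w
  | 0, w => rfl
  | 1, w => rfl
  | (n + 2), w => by
      rw [show n + 2 + 2 = (n + 1) + 3 from rfl, fA_succ3, fA_cons_false n w,
        fA_cons_false (n + 1), ← fA_succ3]

/-- The first `k` letters of `w` are `0` (out-of-range positions count as `0`). -/
def Zp (k : ℕ) (w : List Bool) : Prop := ∀ i < k, w.getD i false = false

theorem Zp_nil (k : ℕ) : Zp k [] := fun i _ => by simp [List.getD]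

theorem Zp_zero (w : List Bool) : Zp 0 w := fun i hi => absurd hi (by omega)

theorem Zp_cons (k : ℕ) (v : List Bool) (h : Zp k v) : Zp (k + 1) (false :: v) := by
  intro i hi
  cases i with
  | zero => rfl
  | succ j => simpa using h j (by omega)

theorem Zp_tail (k : ℕ) (x : Bool) (v : List Bool) (h : Zp (k + 1) (x :: v)) : Zp k v := by
  intro i hi
  simpa using h (i + 1) (by omega)

theorem Zp_not_true (k : ℕ) (v : List Bool) (h : Zp (k + 1) (true :: v)) : False := by
  simpa using h 0 (by omega)

theorem Zp_mono {j k : ℕ} {w : List Bool} (h : Zp k w) (hjk : j ≤ k) : Zp j w :=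
  fun i hi => h i (by omega)

theorem fAct_head : ∀ y, Zp 1 (fAct y)
  | [] => Zp_nil 1
  | false :: v => by intro i hi; interval_cases i; rfl
  | true :: v => by intro i hi; interval_cases i; rfl

theorem F4 : ∀ u, Zp 2 (fA 4 u)
  | [] => by rw [fA_nil]; exact Zp_nil 2
  | false :: v => by
      show Zp 2 (fAct (sAct (fAct (false :: v))))
      show Zp 2 (fAct (true :: sAct v))
      show Zp 2 (false :: fAct (sAct v))
      intro i hi
      interval_cases i
      · rfl
      · simpa using fAct_head (sAct v) 0 (by omega)
  | true :: v => by
      show Zp 2 (fAct (sAct (fAct (true :: v))))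
      show Zp 2 (fAct (true :: fAct v))
      show Zp 2 (false :: fAct (fAct v))
      intro i hi
      interval_cases i
      · rfl
      · simpa using fAct_head (fAct v) 0 (by omega)

/-- Key lemma: if `u` starts with `m - 4` zeros then `f_m(u)` starts with
`m - 2` zeros: applying `f_m` gains two leading zeros. -/
theorem gain2 : ∀ m u, Zp (m - 4) u → Zp (m - 2) (fA m u)
  | 0, u, _ => Zp_zero _
  | 1, u, _ => Zp_zero _
  | 2, u, _ => Zp_zero _
  | 3, u, _ => fAct_head (sAct u)
  | 4, u, _ => F4 u
  | (m + 5), [], _ => by rw [fA_nil]; exact Zp_nil _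
  | (m + 5), true :: v, h => absurd (show Zp (m + 1) (true :: v) from h)
      (fun h' => Zp_not_true m v h')
  | (m + 5), false :: v, h => by
      rw [show m + 5 = (m + 3) + 2 from rfl, fA_cons_false (m + 3) v]
      have hv : Zp m v := Zp_tail m false v (show Zp (m + 1) (false :: v) from h)
      have := gain2 (m + 4) v (show Zp ((m + 4) - 4) v by simpa using hv)
      show Zp (m + 3) (false :: fA (m + 4) v)
      exact Zp_cons (m + 2) _ (by simpa using this)

/-- The image of `f_n` consists of words starting with `n - 3` zeros. -/
theorem imZ : ∀ n w, Zp (n - 3) (fA n w)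
  | 0, w => Zp_zero _
  | 1, w => Zp_zero _
  | 2, w => Zp_zero _
  | 3, w => Zp_zero _
  | (n + 4), w => by
      have h := imZ (n + 2) w
      have h2 := gain2 (n + 3) (fA (n + 2) w)
        (show Zp ((n + 3) - 4) (fA (n + 2) w) by
          have : (n + 3) - 4 = (n + 2) - 3 := by omega
          rw [this]; exact h)
      show Zp (n + 1) (fA (n + 4) w)
      rw [show n + 4 = (n + 1) + 3 from rfl, fA_succ3]
      simpa using h2

theorem sAct_sAct : ∀ w, sAct (sAct w) = w
  | [] => rfl
  | a :: v => by cases a <;> rfl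

/-- `f_b²` fixes every word starting with `b - 1` zeros. -/
theorem fixZ : ∀ b w, Zp (b - 1) w → fA b (fA b w) = w
  | 0, w, _ => rfl
  | 1, w, _ => sAct_sAct w
  | 2, [], _ => rfl
  | 2, true :: v, h => absurd h (fun h' => Zp_not_true 0 v h')
  | 2, false :: v, _ => by
      show fAct (false :: sAct v) = false :: v
      show false :: sAct (sAct v) = false :: v
      rw [sAct_sAct]
  | (b + 3), [], _ => by rw [fA_nil, fA_nil]
  | (b + 3), true :: v, h => absurd (show Zp (b + 2) (true :: v) from h)
      (fun h' => Zp_not_true (b + 1) v h')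
  | (b + 3), false :: v, h => by
      rw [show b + 3 = (b + 1) + 2 from rfl, fA_cons_false (b + 1) v, fA_cons_false (b + 1)]
      have hv : Zp (b + 1) v := Zp_tail (b + 1) false v (show Zp (b + 2) (false :: v) from h)
      rw [fixZ (b + 2) v (by simpa using hv)]

/-- In `F`, for all `a, b` with `a ≥ 3` and `a ≥ b + 2`, the relation
`f_a f_b² = f_a` holds. -/
theorem fa_fb_sq (a b : ℕ) (hb : 1 ≤ b) (ha : 3 ≤ a) (hab : b + 2 ≤ a) :
    ∀ w : List Bool, fA b (fA b (fA a w)) = fA a w := by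
  intro w
  exact fixZ b (fA a w) (Zp_mono (imZ a w) (by omega))
end

section
/- The semigroup F generated by the automaton I satisfies the identity g⁶ = g⁴: for every g ∈ F, g⁶ = g⁴ as transformations of {0,1}*. -/
/-!
A word `u` over the generators acts letter by letter: it sends `a·w` to `o·v(w)`, where the
output letter `o = wordOut u a` and the section `v = wordSection u a` (again a word) are read off
`u`. A word without `f` is a power of `s`, hence an involution. A word containing `f` has
constant output `b`, and its two sections differ only in their first letter, so
`g⁶(a·w) = b·x⁵(y(w))` with `x = c·r`, `y = c'·r` for letters `c, c'`. One proves
`x⁵ ∘ y = x³ ∘ y` for `x = p·t`, `y = q·t` with `p, q` in a finite set of prefixes closed under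
taking sections, by induction on the input. If `t` contains `f`, both sides emit the same letter
and the two sections again have this shape. If `t` is a power of `s`, either `x` is an
involution, or `x⁵ = x³` follows from `v⁴ = v²` for one of a few short sections `v`, a
consequence of `s² = 1`, `f³ = f` and `(fs)³f = fsf`.
-/

def wordAct (u : List Bool) : List Bool → List Bool :=
  fun w => u.foldl (fun v a => if a then fAct v else sAct v) w

def wordOut : List Bool → Bool → Bool
  | [], a => a
  | true :: u, _ => wordOut u false
  | false :: u, a => wordOut u (!a)

def wordSection : List Bool → Bool → List Bool
  | [], _ => []
  | true :: u, a => a :: wordSection u false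
  | false :: u, a => wordSection u (!a)

theorem sAct_involutive : Function.Involutive sAct
  | [] => rfl
  | a :: w => by simp [sAct]

theorem fAct_fAct_fAct (w : List Bool) : fAct (fAct (fAct w)) = fAct w := by
  rcases w with _ | ⟨_ | _, w⟩ <;> simp [fAct, sAct_involutive _]

theorem fAct_cons (a : Bool) (w : List Bool) :
    fAct (a :: w) = false :: (if a then fAct w else sAct w) := by
  cases a <;> rfl

theorem fAct_sAct_fAct_sAct_fAct_sAct_fAct (w : List Bool) :
    fAct (sAct (fAct (sAct (fAct (sAct (fAct w)))))) = fAct (sAct (fAct w)) := by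
  rcases w with _ | ⟨a, w⟩
  · rfl
  · simp [fAct_cons, sAct, fAct_fAct_fAct]

section wordAct

variable (u v : List Bool)

@[simp]
theorem wordAct_nil (w : List Bool) : wordAct [] w = w := rfl

@[simp]
theorem wordAct_cons (x : Bool) (w : List Bool) :
    wordAct (x :: u) w = wordAct u (if x then fAct w else sAct w) := rfl

@[simp]
theorem wordAct_apply_nil : wordAct u [] = [] := by
  induction u with
  | nil => rfl
  | cons x u ih => cases x <;> exact ih

theorem wordAct_apply_cons (a : Bool) (w : List Bool) :
    wordAct u (a :: w) = wordOut u a :: wordAct (wordSection u a) w := by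
  induction u generalizing a w with
  | nil => rfl
  | cons x u ih =>
    cases x
    · exact ih (!a) w
    · rw [wordAct_cons, if_pos rfl, fAct_cons, ih]
      cases a <;> rfl

theorem wordOut_append (a : Bool) : wordOut (u ++ v) a = wordOut v (wordOut u a) := by
  induction u generalizing a with
  | nil => rfl
  | cons x u ih => cases x <;> simp [wordOut, ih]

theorem wordSection_append (a : Bool) :
    wordSection (u ++ v) a = wordSection u a ++ wordSection v (wordOut u a) := by
  induction u generalizing a with
  | nil => rfl
  | cons x u ih => cases x <;> simp [wordSection, wordOut, ih]

variable {u}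

theorem wordOut_eq_of_true_mem (h : true ∈ u) (a b : Bool) : wordOut u a = wordOut u b := by
  induction u generalizing a b with
  | nil => cases h
  | cons x u ih =>
    cases x
    · exact ih (by simpa using h) _ _
    · rfl

theorem exists_wordSection_eq_of_true_mem (h : true ∈ u) :
    ∃ ε r, ∀ a, wordSection u a = xor a ε :: r := by
  induction u with
  | nil => cases h
  | cons x u ih =>
    cases x
    · obtain ⟨ε, r, hr⟩ := ih (by simpa using h)
      exact ⟨!ε, r, fun a => by rw [wordSection, hr]; cases a <;> cases ε <;> rfl⟩
    · exact ⟨false, wordSection u false, fun a => by simp [wordSection]⟩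

theorem wordSection_eq_nil_of_true_not_mem (h : true ∉ u) (a : Bool) : wordSection u a = [] := by
  induction u generalizing a with
  | nil => rfl
  | cons x u ih =>
    cases x
    · exact ih (by simpa using h) _
    · simp at h

theorem wordOut_eq_xor_of_true_not_mem (h : true ∉ u) (a : Bool) :
    wordOut u a = xor a (wordOut u false) := by
  induction u generalizing a with
  | nil => cases a <;> rfl
  | cons x u ih =>
    cases x
    · have h' : true ∉ u := by simpa using h
      show wordOut u (!a) = xor a (wordOut u (!false))
      rw [ih h', ih h' (!false)]
      cases a <;> cases wordOut u false <;> rfl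
    · simp at h

theorem involutive_wordAct_of_true_not_mem (h : true ∉ u) : Function.Involutive (wordAct u)
  | [] => by simp
  | a :: w => by
    simp only [wordAct_apply_cons, wordSection_eq_nil_of_true_not_mem h, wordAct_nil,
      wordOut_eq_xor_of_true_not_mem h (wordOut u a)]
    rw [wordOut_eq_xor_of_true_not_mem h a]
    cases a <;> cases wordOut u false <;> rfl

end wordAct

theorem Function.Involutive.iterate_add_two {α : Type*} {f : α → α}
    (hf : Function.Involutive f) (n : ℕ) (x : α) : f^[n + 2] x = f^[n] x := by
  rw [Function.iterate_succ_apply, Function.iterate_succ_apply, hf]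

/-- The closure of `[]` under `p ↦ wordSection p a ++ [c]`. -/
def reachablePrefixes : List (List Bool) :=
  [[], [false], [true],
   [false, false], [false, true], [true, false], [true, true],
   [false, false, false], [false, false, true], [false, true, false],
   [false, true, true], [true, false, false], [true, false, true],
   [true, true, false], [true, true, true],
   [false, false, false, false], [false, false, false, true],
   [true, false, false, false], [true, false, false, true]]

theorem wordSection_append_singleton_mem_reachablePrefixes :
    ∀ p ∈ reachablePrefixes, ∀ a c : Bool, wordSection p a ++ [c] ∈ reachablePrefixes := by
  decide

theorem iterate_four_wordAct_wordSection {p : List Bool} (hp : p ∈ reachablePrefixes)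
    (a : Bool) (w : List Bool) :
    (wordAct (wordSection p a))^[4] w = (wordAct (wordSection p a))^[2] w := by
  have hsec : ∀ p ∈ reachablePrefixes, ∀ a : Bool, wordSection p a ∈
      [[], [false], [false, false], [false, false, false],
       [true], [true, true], [true, false, false], [false, true], [true, false]] := by
    decide
  have hw := hsec p hp a
  simp only [List.mem_cons, List.not_mem_nil, or_false] at hw
  rcases hw with h | h | h | h | h | h | h | h | h <;> rw [h]
  iterate 4 exact (involutive_wordAct_of_true_not_mem (by decide)).iterate_add_two 2 w
  all_goals simp only [Function.iterate_succ_apply', Function.iterate_zero_apply, wordAct_cons,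
    wordAct_nil, if_true, Bool.false_eq_true, if_false, sAct_involutive _, fAct_fAct_fAct,
    fAct_sAct_fAct_sAct_fAct_sAct_fAct]

theorem iterate_five_wordAct_append_of_true_mem_of_true_not_mem {p t : List Bool}
    (hp : p ∈ reachablePrefixes) (hpf : true ∈ p) (ht : true ∉ t) (z : List Bool) :
    (wordAct (p ++ t))^[5] z = (wordAct (p ++ t))^[3] z := by
  rcases z with _ | ⟨e, w⟩
  · simp only [Function.iterate_fixed (wordAct_apply_nil _)]
  set b := wordOut t (wordOut p false)
  have hx : ∀ e η, wordAct (p ++ t) (e :: η) = b :: wordAct (wordSection p e) η := by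
    intro e η
    rw [wordAct_apply_cons, wordOut_append, wordSection_append,
      wordSection_eq_nil_of_true_not_mem ht, List.append_nil, wordOut_eq_of_true_mem hpf e false]
  have hsc : Function.Semiconj (List.cons b) (wordAct (wordSection p b)) (wordAct (p ++ t)) :=
    fun η => (hx b η).symm
  rw [Function.iterate_succ_apply _ 4, Function.iterate_succ_apply _ 2, hx,
    ← (hsc.iterate_right 4).eq, ← (hsc.iterate_right 2).eq, iterate_four_wordAct_wordSection hp]

theorem iterate_five_wordAct_append_wordAct_append (w : List Bool) :
    ∀ p q t, p ∈ reachablePrefixes → q ∈ reachablePrefixes →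
      (wordAct (p ++ t))^[5] (wordAct (q ++ t) w) =
        (wordAct (p ++ t))^[3] (wordAct (q ++ t) w) := by
  induction w with
  | nil => intro p q t _ _; simp only [wordAct_apply_nil, Function.iterate_fixed]
  | cons a w ih =>
    intro p q t hp hq
    by_cases ht : true ∈ t
    · obtain ⟨ε, r, hr⟩ := exists_wordSection_eq_of_true_mem ht
      let next (p : List Bool) (e : Bool) : List Bool := wordSection p e ++ [xor (wordOut p e) ε]
      have hx : ∀ p e η,
          wordAct (p ++ t) (e :: η) = wordOut t false :: wordAct (next p e ++ r) η := by
        intro p e η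
        rw [wordAct_apply_cons, wordOut_append, wordSection_append, hr,
          wordOut_eq_of_true_mem ht _ false]
        simp only [next, List.append_assoc, List.singleton_append]
      have hsc : Function.Semiconj (List.cons (wordOut t false))
          (wordAct (next p (wordOut t false) ++ r)) (wordAct (p ++ t)) :=
        fun η => (hx p _ η).symm
      rw [hx q, ← (hsc.iterate_right 5).eq, ← (hsc.iterate_right 3).eq,
        ih _ _ r (wordSection_append_singleton_mem_reachablePrefixes p hp _ _)
          (wordSection_append_singleton_mem_reachablePrefixes q hq _ _)]
    · by_cases hpf : true ∈ p
      · exact iterate_five_wordAct_append_of_true_mem_of_true_not_mem hp hpf ht _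
      · exact (involutive_wordAct_of_true_not_mem (by simp [hpf, ht])).iterate_add_two 3 _

/-- The semigroup `F` satisfies the identity `g⁶ = g⁴`: for every `g ∈ F`,
`g⁶ = g⁴` as transformations of `{0,1}*`. -/
theorem F_identity (g : List Bool → List Bool) (hg : inF g) :
    ∀ w : List Bool, g^[6] w = g^[4] w := by
  obtain ⟨u, -, rfl⟩ := hg
  exact fun w => iterate_five_wordAct_append_wordAct_append w [] [] u (by decide) (by decide)
end
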